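/- arXiv:2010.02916 — 3 statements merged into one kernel-verified Lean document; each statement's English description precedes it below -/
import Mathlib

section
/- Let g : ℝ^d → ℝ be twice differentiable and f(w) := g(w/‖w‖) for w ≠ 0. Then for any v with ⟨v, w⟩ = 0, v^⊤ ∇²f(w) v = (1/‖w‖²)(v^⊤ ∇²g(w̄) v − ⟨∇g(w̄), w̄⟩ ‖v‖²), where w̄ = w/‖w‖. -/
/-!
Write `f = g ∘ N` with `N x = ‖x‖⁻¹ • x`. The second-order chain rule gives
`D²f(w)[v,v] = D²g(w̄)[DN(w)v, DN(w)v] + Dg(w̄)[D²N(w)[v,v]]`. For `v ⊥ w` the radial part of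
`DN(w)v = ‖w‖⁻¹ v - ‖w‖⁻³ ⟪w,v⟫ w` vanishes, so `DN(w)v = ‖w‖⁻¹ v`, while differentiating it
once more in the direction `v` leaves only `D²N(w)[v,v] = -‖v‖²‖w‖⁻³ w = -(‖v‖²/‖w‖²) w̄`.
-/

open Filter Topology
open scoped RealInnerProductSpace

section SecondOrderChainRule

variable {𝕜 E F G : Type*} [NontriviallyNormedField 𝕜] [NormedAddCommGroup E] [NormedSpace 𝕜 E]
  [NormedAddCommGroup F] [NormedSpace 𝕜 F] [NormedAddCommGroup G] [NormedSpace 𝕜 G]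

theorem ContDiffAt.fderiv_fderiv_comp_apply {g : F → G} {N : E → F} {x : E}
    (hg : ContDiffAt 𝕜 2 g (N x)) (hN : ContDiffAt 𝕜 2 N x) (v v' : E) :
    fderiv 𝕜 (fderiv 𝕜 (g ∘ N)) x v v' =
      fderiv 𝕜 (fderiv 𝕜 g) (N x) (fderiv 𝕜 N x v) (fderiv 𝕜 N x v') +
        fderiv 𝕜 g (N x) (fderiv 𝕜 (fderiv 𝕜 N) x v v') := by
  have hg' : ∀ᶠ y in 𝓝 x, DifferentiableAt 𝕜 g (N y) :=
    hN.continuousAt.eventually ((hg.eventually (by simp)).mono fun y hy =>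
      hy.differentiableAt two_ne_zero)
  have hN' : ∀ᶠ y in 𝓝 x, DifferentiableAt 𝕜 N y :=
    (hN.eventually (by simp)).mono fun y hy => hy.differentiableAt two_ne_zero
  have hchain : fderiv 𝕜 (g ∘ N) =ᶠ[𝓝 x] fun y => (fderiv 𝕜 g (N y)).comp (fderiv 𝕜 N y) :=
    (hg'.and hN').mono fun y hy => fderiv_comp y hy.1 hy.2
  have hDg : DifferentiableAt 𝕜 (fderiv 𝕜 g) (N x) :=
    (hg.fderiv_right (m := 1) le_rfl).differentiableAt one_ne_zero
  have hDN : DifferentiableAt 𝕜 (fderiv 𝕜 N) x :=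
    (hN.fderiv_right (m := 1) le_rfl).differentiableAt one_ne_zero
  have hDgN : HasFDerivAt (fun y => fderiv 𝕜 g (N y))
      ((fderiv 𝕜 (fderiv 𝕜 g) (N x)).comp (fderiv 𝕜 N x)) x :=
    hDg.hasFDerivAt.comp x (hN.differentiableAt two_ne_zero).hasFDerivAt
  rw [hchain.fderiv_eq, (hDgN.clm_comp hDN.hasFDerivAt).fderiv]
  simp [add_comm]

end SecondOrderChainRule

section Normalize

variable {E : Type*} [NormedAddCommGroup E] [InnerProductSpace ℝ E] {x : E}

theorem contDiffAt_inv_norm_smul_self {n : WithTop ℕ∞} (hx : x ≠ 0) :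
    ContDiffAt ℝ n (fun y : E => ‖y‖⁻¹ • y) x :=
  ((contDiffAt_norm ℝ hx).inv (norm_ne_zero_iff.2 hx)).smul contDiffAt_id

theorem hasFDerivAt_norm_of_ne_zero (hx : x ≠ 0) :
    HasFDerivAt (fun y : E => ‖y‖) (‖x‖⁻¹ • innerSL ℝ x) x := by
  have h := (hasStrictFDerivAt_norm_sq x).hasFDerivAt.sqrt (pow_ne_zero 2 (norm_ne_zero_iff.2 hx))
  simp only [Real.sqrt_sq (norm_nonneg _)] at h
  refine h.congr_fderiv ?_
  ext y
  simp only [one_div, mul_inv_rev, smul_apply, coe_innerSL_apply, nsmul_eq_mul, Nat.cast_ofNat,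
    smul_eq_mul]
  field_simp

theorem hasFDerivAt_inv_norm (hx : x ≠ 0) :
    HasFDerivAt (fun y : E => ‖y‖⁻¹) (-(‖x‖ ^ 3)⁻¹ • innerSL ℝ x) x := by
  refine ((hasDerivAt_inv (norm_ne_zero_iff.2 hx)).comp_hasFDerivAt x
    (hasFDerivAt_norm_of_ne_zero hx)).congr_fderiv ?_
  ext y
  simp only [neg_smul, neg_apply, smul_apply, coe_innerSL_apply, smul_eq_mul, neg_inj]
  field_simp

theorem fderiv_inv_norm_smul_self_apply (hx : x ≠ 0) (v : E) :
    fderiv ℝ (fun y : E => ‖y‖⁻¹ • y) x v = ‖x‖⁻¹ • v - ((‖x‖ ^ 3)⁻¹ * ⟪x, v⟫) • x := by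
  have h : HasFDerivAt (fun y : E => ‖y‖⁻¹ • y) _ x :=
    (hasFDerivAt_inv_norm hx).smul (hasFDerivAt_id x)
  rw [h.fderiv]
  simp [sub_eq_add_neg]

theorem fderiv_fderiv_inv_norm_smul_self_apply_of_inner_eq_zero (hx : x ≠ 0) {v : E}
    (hv : ⟪v, x⟫ = 0) :
    fderiv ℝ (fderiv ℝ (fun y : E => ‖y‖⁻¹ • y)) x v v = -(‖v‖ ^ 2 / ‖x‖ ^ 2) • (‖x‖⁻¹ • x) := by
  have hDN : DifferentiableAt ℝ (fderiv ℝ (fun y : E => ‖y‖⁻¹ • y)) x :=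
    ((contDiffAt_inv_norm_smul_self (n := 2) hx).fderiv_right (m := 1) le_rfl).differentiableAt
      one_ne_zero
  have hloc : (fun y => fderiv ℝ (fun y : E => ‖y‖⁻¹ • y) y v) =ᶠ[𝓝 x]
      fun y => ‖y‖⁻¹ • v - ((‖y‖ ^ 3)⁻¹ * ⟪y, v⟫) • y :=
    (eventually_ne_nhds hx).mono fun y hy => fderiv_inv_norm_smul_self_apply hy v
  have hcube : DifferentiableAt ℝ (fun y : E => (‖y‖ ^ 3)⁻¹) x :=
    (((contDiffAt_norm ℝ hx).differentiableAt one_ne_zero).pow 3).inv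
      (pow_ne_zero 3 (norm_ne_zero_iff.2 hx))
  have hinner : HasFDerivAt (fun y : E => ⟪y, v⟫) (innerSL ℝ v) x := by
    simpa [real_inner_comm] using (innerSL ℝ v).hasFDerivAt
  have h : HasFDerivAt (fun y => ‖y‖⁻¹ • v - ((‖y‖ ^ 3)⁻¹ * ⟪y, v⟫) • y) _ x :=
    ((hasFDerivAt_inv_norm hx).smul_const v).sub
      ((hcube.hasFDerivAt.mul hinner).smul (hasFDerivAt_id x))
  have hdir : fderiv ℝ (fderiv ℝ (fun y : E => ‖y‖⁻¹ • y)) x v v =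
      fderiv ℝ (fun y => fderiv ℝ (fun y : E => ‖y‖⁻¹ • y) y v) x v := by
    simp [fderiv_clm_apply hDN (differentiableAt_const v)]
  rw [hdir, hloc.fderiv_eq, h.fderiv]
  have hv' : ⟪x, v⟫ = 0 := by rwa [real_inner_comm]
  simp only [neg_smul, Pi.mul_apply, hv', mul_zero, zero_smul, add_zero, zero_add, sub_apply,
    ContinuousLinearMap.smulRight_apply, neg_apply, smul_apply, coe_innerSL_apply, smul_eq_mul,
    neg_zero, inner_self_eq_norm_sq_to_K, Real.ringHom_apply, zero_sub, smul_smul, neg_mul,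
    neg_inj]
  congr 1
  ring

end Normalize

theorem stmt16 {d : ℕ} (g : EuclideanSpace ℝ (Fin d) → ℝ) (hg : ContDiff ℝ 2 g)
    (w v : EuclideanSpace ℝ (Fin d)) (hw : w ≠ 0) (hvw : (inner ℝ v w : ℝ) = 0) :
    let f : EuclideanSpace ℝ (Fin d) → ℝ := fun x => g (‖x‖⁻¹ • x)
    let wbar : EuclideanSpace ℝ (Fin d) := ‖w‖⁻¹ • w
    fderiv ℝ (fderiv ℝ f) w v v =
      (1 / ‖w‖ ^ 2) *
        (fderiv ℝ (fderiv ℝ g) wbar v v - fderiv ℝ g wbar wbar * ‖v‖ ^ 2) := by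
  intro f wbar
  have hwv : ⟪w, v⟫ = 0 := by rwa [real_inner_comm]
  have hchain := hg.contDiffAt.fderiv_fderiv_comp_apply (contDiffAt_inv_norm_smul_self hw) v v
  rw [fderiv_inv_norm_smul_self_apply hw, hwv,
    fderiv_fderiv_inv_norm_smul_self_apply_of_inner_eq_zero hw hvw] at hchain
  refine hchain.trans ?_
  simp only [wbar, mul_zero, zero_smul, sub_zero, map_smul, smul_eq_mul, smul_apply]
  field_simp
  ring
end

section
/- Let g : ℝ^d → ℝ be twice differentiable, w ∈ ℝ^d \ {0}, v ⊥ w, and define h(λ) = g((w + λ‖w‖v)/‖w + λ‖w‖v‖). Then the second-order Taylor expansion at λ = 0 is h(λ) = g(w̄) + λ⟨∇g(w̄), v⟩ + (λ²/2)(v^⊤∇²g(w̄)v − ‖v‖²⟨∇g(w̄), w̄⟩) + o(λ²), where w̄ = w/‖w‖. -/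
/-!
Since `v ⊥ w̄` and `‖w̄‖ = 1`, Pythagoras gives `‖w̄ + λ v‖ = √(1 + ‖v‖² λ²)`, and `h = g ∘ γ` for the
normalized line `γ λ = (w̄ + λ v) / √(1 + ‖v‖² λ²)` (the positive factor `‖w‖` cancels). This curve
has `γ 0 = w̄`, `γ' 0 = v` and `γ'' 0 = -‖v‖² w̄`, so the chain rule gives
`h'' 0 = D²g(w̄)(v, v) + Dg(w̄)(γ'' 0)`, and the expansion is Taylor's formula of order two for `h`,
obtained from the mean value theorem applied to the remainder.
-/

open Asymptotics

open Topology

theorem isLittleO_sub_taylor_two_of_hasDerivAt {E : Type*} [NormedAddCommGroup E]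
    [NormedSpace ℝ E] {f f' : ℝ → E} {A : E} {x₀ : ℝ}
    (hf : ∀ x, HasDerivAt f (f' x) x) (hf' : HasDerivAt f' A x₀) :
    (fun x => f x - (f x₀ + (x - x₀) • f' x₀ + ((x - x₀) ^ 2 / 2) • A)) =o[𝓝 x₀]
      fun x => (x - x₀) ^ 2 := by
  have hderiv : ∀ x, HasDerivAt (fun x => f x - ((x - x₀) • f' x₀ + ((x - x₀) ^ 2 / 2) • A))
      (f' x - (f' x₀ + (x - x₀) • A)) x := by
    intro x
    have hlin := ((hasDerivAt_id x).sub_const x₀).smul_const (f' x₀)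
    have hquad := ((((hasDerivAt_id x).sub_const x₀).pow 2).div_const 2).smul_const A
    convert (hf x).sub (hlin.add hquad) using 1
    · rfl
    · norm_num
  have h := convex_univ.isLittleO_pow_succ_real (Set.mem_univ x₀) (n := 1)
    (fun x _ => (hderiv x).hasDerivWithinAt) (by
      simpa [nhdsWithin_univ, sub_sub] using hf'.isLittleO)
  simp only [nhdsWithin_univ, sub_self] at h
  exact h.congr_left fun x => by module

theorem isLittleO_comp_sub_taylor_two {E F : Type*} [NormedAddCommGroup E] [NormedSpace ℝ E]
    [NormedAddCommGroup F] [NormedSpace ℝ F] {g : E → F} {γ γ' : ℝ → E} {a : E}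
    (hg : Differentiable ℝ g) (hg' : DifferentiableAt ℝ (fderiv ℝ g) (γ 0))
    (hγ : ∀ t, HasDerivAt γ (γ' t) t) (hγ' : HasDerivAt γ' a 0) :
    (fun t => g (γ t) - (g (γ 0) + t • fderiv ℝ g (γ 0) (γ' 0) +
        (t ^ 2 / 2) • (fderiv ℝ (fderiv ℝ g) (γ 0) (γ' 0) (γ' 0) + fderiv ℝ g (γ 0) a)))
      =o[𝓝 0] fun t => t ^ 2 := by
  have hfirst : ∀ t, HasDerivAt (g ∘ γ) (fderiv ℝ g (γ t) (γ' t)) t := fun t =>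
    (hg (γ t)).hasFDerivAt.comp_hasDerivAt t (hγ t)
  have hsecond := (hg'.hasFDerivAt.comp_hasDerivAt 0 (hγ 0)).clm_apply hγ'
  simpa using isLittleO_sub_taylor_two_of_hasDerivAt hfirst hsecond

section NormalizedLine

variable {E : Type*} [NormedAddCommGroup E] [InnerProductSpace ℝ E] {u v : E}

theorem norm_add_smul_of_inner_eq_zero (hu : ‖u‖ = 1) (huv : inner ℝ u v = 0) (t : ℝ) :
    ‖u + t • v‖ = √(1 + ‖v‖ ^ 2 * t ^ 2) := by
  rw [norm_add_eq_sqrt_iff_real_inner_eq_zero.2 (by simp [inner_smul_right, huv]), hu,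
    norm_smul, Real.norm_eq_abs]
  congr 1
  rw [← sq_abs t]
  ring

theorem hasDerivAt_inv_sqrt_one_add_mul_sq {a : ℝ} (ha : 0 ≤ a) (t : ℝ) :
    HasDerivAt (fun t => (√(1 + a * t ^ 2))⁻¹) (-a * t * (√(1 + a * t ^ 2))⁻¹ ^ 3) t := by
  have hpos : 0 < 1 + a * t ^ 2 := by positivity
  have hq := (((hasDerivAt_id t).pow 2).const_mul a).const_add 1
  refine ((hq.sqrt hpos.ne').inv (Real.sqrt_pos.2 hpos).ne').congr_deriv ?_
  simp only [Pi.pow_apply, id_eq]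
  field_simp
  ring

theorem exists_hasDerivAt_normalize_add_smul (hu : ‖u‖ = 1) (huv : inner ℝ u v = 0) :
    ∃ γ' : ℝ → E, (∀ t, HasDerivAt (fun t => NormedSpace.normalize (u + t • v)) (γ' t) t) ∧
      γ' 0 = v ∧ HasDerivAt γ' (-‖v‖ ^ 2 • u) 0 := by
  have hs := hasDerivAt_inv_sqrt_one_add_mul_sq (sq_nonneg ‖v‖)
  have hs' : HasDerivAt (fun t => -‖v‖ ^ 2 * t * (√(1 + ‖v‖ ^ 2 * t ^ 2))⁻¹ ^ 3)
      (-‖v‖ ^ 2) 0 :=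
    (((hasDerivAt_id (0 : ℝ)).const_mul (-‖v‖ ^ 2)).mul ((hs 0).pow 3)).congr_deriv (by simp)
  have hline : ∀ t : ℝ, HasDerivAt (fun t : ℝ => u + t • v) v t := fun t => by
    simpa using ((hasDerivAt_id t).smul_const v).const_add u
  refine ⟨fun t => (-‖v‖ ^ 2 * t * (√(1 + ‖v‖ ^ 2 * t ^ 2))⁻¹ ^ 3) • (u + t • v) +
    (√(1 + ‖v‖ ^ 2 * t ^ 2))⁻¹ • v, fun t => ?_, by simp, ?_⟩
  · convert (hs t).smul (hline t) using 1
    · funext t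
      simp only [NormedSpace.normalize, norm_add_smul_of_inner_eq_zero hu huv]
      rfl
    · exact add_comm _ _
  · exact ((hs'.smul (hline 0)).add ((hs 0).smul_const v)).congr_deriv (by simp)

end NormalizedLine

theorem stmt17 {d : ℕ} (g : EuclideanSpace ℝ (Fin d) → ℝ) (hg : ContDiff ℝ 2 g)
    (w v : EuclideanSpace ℝ (Fin d)) (hw : w ≠ 0) (hvw : (inner ℝ v w : ℝ) = 0) :
    let wbar : EuclideanSpace ℝ (Fin d) := ‖w‖⁻¹ • w
    let h : ℝ → ℝ := fun l => g (‖w + (l * ‖w‖) • v‖⁻¹ • (w + (l * ‖w‖) • v))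
    (fun l : ℝ => h l - (g wbar + l * (inner ℝ (gradient g wbar) v : ℝ) +
        l ^ 2 / 2 * (fderiv ℝ (fderiv ℝ g) wbar v v -
          ‖v‖ ^ 2 * (inner ℝ (gradient g wbar) wbar : ℝ))))
      =o[nhds 0] fun l : ℝ => l ^ 2 := by
  intro wbar h
  have hwbar : ‖wbar‖ = 1 := NormedSpace.norm_normalize hw
  have hwbarv : inner ℝ wbar v = 0 := by
    rw [real_inner_comm]
    simp [wbar, inner_smul_right, hvw]
  have hh : h = fun l => g (NormedSpace.normalize (wbar + l • v)) := by
    funext l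
    have hscale : w + (l * ‖w‖) • v = ‖w‖ • (wbar + l • v) := by
      simp [wbar, smul_smul, norm_ne_zero_iff.2 hw, mul_comm]
    simp only [h, hscale]
    exact congrArg g (NormedSpace.normalize_smul_of_pos (norm_pos_iff.2 hw) _)
  obtain ⟨γ', hγ, hγ'0, hγ'⟩ := exists_hasDerivAt_normalize_add_smul hwbar hwbarv
  have hγ0 : NormedSpace.normalize (wbar + (0 : ℝ) • v) = wbar := by
    simpa using NormedSpace.normalize_eq_self_of_norm_eq_one hwbar
  have htaylor := isLittleO_comp_sub_taylor_two (hg.differentiable two_ne_zero)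
    ((hg.fderiv_right le_rfl).differentiable one_ne_zero _) hγ hγ'
  rw [hγ0, hγ'0] at htaylor
  rw [hh]
  refine htaylor.congr_left fun l => ?_
  simp only [InnerProductSpace.toDual_symm_apply, gradient, map_smul, smul_eq_mul]
  ring
end

section
/- In the AdamW update with ε = 0, constant schedule multiplier, and scale-invariant losses f_t: if two trajectories satisfy θ'_t = C θ_t for t ≤ T with learning rates α' = Cα and identical (λ, η, β₁, β₂), then since ∇f_t(Cθ) = (1/C)∇f_t(θ), the normalized update m̂_T/√(v̂_T) is identical for both trajectories and θ'_{T+1} = C θ_{T+1}; by induction the two trajectories coincide in function space. -/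
/-!
Scale invariance `f (c • x) = f x` gives `∇f (c • x) = c⁻¹ • ∇f x`. Hence if `θ' = C • θ`, the second
trajectory's first moment is `C⁻¹` times the first one's and its second moment `C⁻²` times, so
the normalized update `m̂ / √v̂` is the same for both. With the learning rate `C * α` the step of the
second trajectory is then `C` times that of the first, which propagates `θ' = C • θ` by induction.
-/

theorem fderiv_smul_eq_inv_smul_of_smul_invariant {𝕜 E F : Type*} [NontriviallyNormedField 𝕜]
    [NormedAddCommGroup E] [NormedSpace 𝕜 E] [NormedAddCommGroup F] [NormedSpace 𝕜 F]
    {f : E → F} {c : 𝕜} (hc : c ≠ 0) (hf : ∀ x, f (c • x) = f x) (x : E) :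
    fderiv 𝕜 f (c • x) = c⁻¹ • fderiv 𝕜 f x := by
  have h := fderiv_comp_smul (f := f) (x := x) c
  simp only [hf] at h
  rw [h, inv_smul_smul₀ hc]

theorem div_div_sqrt_smul_sq_smul {ι : Type*} {k : ℝ} (hk : 0 < k) (m v : ι → ℝ) (c₁ c₂ : ℝ) :
    (fun i => (k • m) i / c₁ / √((k ^ 2 • v) i / c₂)) = fun i => m i / c₁ / √(v i / c₂) := by
  funext i
  have hsqrt : √((k ^ 2 • v) i / c₂) = k * √(v i / c₂) := by
    rw [Pi.smul_apply, smul_eq_mul, mul_div_assoc, Real.sqrt_mul (by positivity),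
      Real.sqrt_sq hk.le]
  rw [hsqrt, Pi.smul_apply, smul_eq_mul, mul_div_assoc, mul_div_mul_left _ _ hk.ne']

theorem stmt19_general {d : ℕ} (C α η lam β1 β2 : ℝ) (hC : 0 < C)
    (f : ℕ → (Fin d → ℝ) → ℝ)
    (hscale : ∀ (t : ℕ) (x : Fin d → ℝ) (c : ℝ), 0 < c → f t (c • x) = f t x)
    (θ θ' m m' v v' : ℕ → Fin d → ℝ)
    (grad : ℕ → (Fin d → ℝ) → Fin d → ℝ)
    (hgrad : ∀ t x i, grad t x i = fderiv ℝ (f t) x (Pi.single i 1))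
    (hθ0 : θ' 0 = C • θ 0)
    (hm0 : m 0 = 0) (hm'0 : m' 0 = 0) (hv0 : v 0 = 0) (hv'0 : v' 0 = 0)
    (hm : ∀ t, m (t + 1) = β1 • m t + (1 - β1) • grad (t + 1) (θ t))
    (hv : ∀ t i, v (t + 1) i = β2 * v t i + (1 - β2) * (grad (t + 1) (θ t) i) ^ 2)
    (hθ : ∀ t, θ (t + 1) = θ t - η • (α • (fun i =>
        (m (t + 1) i / (1 - β1 ^ (t + 1))) /
          Real.sqrt (v (t + 1) i / (1 - β2 ^ (t + 1)))) + lam • θ t))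
    (hm' : ∀ t, m' (t + 1) = β1 • m' t + (1 - β1) • grad (t + 1) (θ' t))
    (hv' : ∀ t i, v' (t + 1) i = β2 * v' t i + (1 - β2) * (grad (t + 1) (θ' t) i) ^ 2)
    (hθ' : ∀ t, θ' (t + 1) = θ' t - η • ((C * α) • (fun i =>
        (m' (t + 1) i / (1 - β1 ^ (t + 1))) /
          Real.sqrt (v' (t + 1) i / (1 - β2 ^ (t + 1)))) + lam • θ' t)) :
    (∀ t i, (m' (t + 1) i / (1 - β1 ^ (t + 1))) /
        Real.sqrt (v' (t + 1) i / (1 - β2 ^ (t + 1))) =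
      (m (t + 1) i / (1 - β1 ^ (t + 1))) /
        Real.sqrt (v (t + 1) i / (1 - β2 ^ (t + 1)))) ∧
    ∀ t, θ' t = C • θ t := by
  have hgrad_smul : ∀ t x, grad t (C • x) = C⁻¹ • grad t x := fun t x => funext fun i => by
    simp only [hgrad, Pi.smul_apply, smul_eq_mul, FunLike.coe_smul,
      fderiv_smul_eq_inv_smul_of_smul_invariant hC.ne' (fun y => hscale t y C hC)]
  have key : ∀ t, θ' t = C • θ t ∧ m' t = C⁻¹ • m t ∧ v' t = C⁻¹ ^ 2 • v t := by
    intro t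
    induction t with
    | zero => exact ⟨hθ0, by rw [hm0, hm'0, smul_zero], by rw [hv0, hv'0, smul_zero]⟩
    | succ n ih =>
      obtain ⟨hθn, hmn, hvn⟩ := ih
      have hm1 : m' (n + 1) = C⁻¹ • m (n + 1) := by
        rw [hm', hm, hθn, hgrad_smul, hmn]
        module
      have hv1 : v' (n + 1) = C⁻¹ ^ 2 • v (n + 1) := funext fun i => by
        simp only [hv', hv, hθn, hgrad_smul, hvn, Pi.smul_apply, smul_eq_mul]
        ring
      refine ⟨?_, hm1, hv1⟩
      rw [hθ', hm1, hv1, div_div_sqrt_smul_sq_smul (inv_pos.mpr hC), hθ, hθn]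
      module
  refine ⟨fun t i => ?_, fun t => (key t).1⟩
  obtain ⟨-, hmt, hvt⟩ := key (t + 1)
  rw [hmt, hvt]
  exact congrFun (div_div_sqrt_smul_sq_smul (inv_pos.mpr hC) _ _ _ _) i

theorem stmt19 {d : ℕ} (C α η lam β1 β2 : ℝ) (hC : 0 < C)
    (f : ℕ → (Fin d → ℝ) → ℝ)
    (hscale : ∀ (t : ℕ) (x : Fin d → ℝ) (c : ℝ), 0 < c → f t (c • x) = f t x)
    (hdiff : ∀ (t : ℕ) (x : Fin d → ℝ), x ≠ 0 → DifferentiableAt ℝ (f t) x)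
    (θ θ' m m' v v' : ℕ → Fin d → ℝ)
    (grad : ℕ → (Fin d → ℝ) → Fin d → ℝ)
    (hgrad : ∀ t x i, grad t x i = fderiv ℝ (f t) x (Pi.single i 1))
    (hθ0 : θ' 0 = C • θ 0) (hθne : ∀ t, θ t ≠ 0) (hθ'ne : ∀ t, θ' t ≠ 0)
    (hm0 : m 0 = 0) (hm'0 : m' 0 = 0) (hv0 : v 0 = 0) (hv'0 : v' 0 = 0)
    (hm : ∀ t, m (t + 1) = β1 • m t + (1 - β1) • grad (t + 1) (θ t))
    (hv : ∀ t i, v (t + 1) i = β2 * v t i + (1 - β2) * (grad (t + 1) (θ t) i) ^ 2)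
    (hθ : ∀ t, θ (t + 1) = θ t - η • (α • (fun i =>
        (m (t + 1) i / (1 - β1 ^ (t + 1))) /
          Real.sqrt (v (t + 1) i / (1 - β2 ^ (t + 1)))) + lam • θ t))
    (hm' : ∀ t, m' (t + 1) = β1 • m' t + (1 - β1) • grad (t + 1) (θ' t))
    (hv' : ∀ t i, v' (t + 1) i = β2 * v' t i + (1 - β2) * (grad (t + 1) (θ' t) i) ^ 2)
    (hθ' : ∀ t, θ' (t + 1) = θ' t - η • ((C * α) • (fun i =>
        (m' (t + 1) i / (1 - β1 ^ (t + 1))) /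
          Real.sqrt (v' (t + 1) i / (1 - β2 ^ (t + 1)))) + lam • θ' t))
    (hvne : ∀ t i, v (t + 1) i / (1 - β2 ^ (t + 1)) ≠ 0)
    (hv'ne : ∀ t i, v' (t + 1) i / (1 - β2 ^ (t + 1)) ≠ 0) :
    (∀ t i, (m' (t + 1) i / (1 - β1 ^ (t + 1))) /
        Real.sqrt (v' (t + 1) i / (1 - β2 ^ (t + 1))) =
      (m (t + 1) i / (1 - β1 ^ (t + 1))) /
        Real.sqrt (v (t + 1) i / (1 - β2 ^ (t + 1)))) ∧
    ∀ t, θ' t = C • θ t :=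
  stmt19_general C α η lam β1 β2 hC f hscale θ θ' m m' v v' grad hgrad hθ0 hm0 hm'0 hv0 hv'0 hm hv
    hθ hm' hv' hθ'
end
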